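/- There is no connected graph G of order n, all of whose blocks are minimally 2-connected triangle-free graphs, with mvd(G) = n − 1. -/

import Mathlib

/-!
A forest has mvd equal to its order: an internal vertex of the unique path between two
nonadjacent vertices is a one-vertex cut, so every colouring, in particular an injective one,
is an MVD-colouring.

Otherwise some cycle lies in a block `B`, which is then 2-connected and triangle-free. An
MVD-colouring with `n - 1` colours has a single colour class `{p, q}` of size two and is
injective elsewhere. Any cut separating two vertices of `B` meets `B` twice, so a cut between
two nonadjacent vertices of `B` yields `p, q ∈ B`, and a cut between `p` and a vertex of `B`
not adjacent to it would need a monochromatic pair avoiding `p`, which does not exist. Hence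
`p` and `q` are adjacent to each other and to every other vertex of `B`: a triangle.
-/

open SimpleGraph

variable {V : Type*}

/-- There is an `x`–`y` walk all of whose vertices lie in `S`. -/
def ReachableWithin (G : SimpleGraph V) (S : Set V) (x y : V) : Prop :=
  ∃ p : G.Walk x y, ∀ v ∈ p.support, v ∈ S

/-- The vertex set `S` induces a (nonempty) connected subgraph of `G`. -/
def ConnectedOn (G : SimpleGraph V) (S : Set V) : Prop :=
  S.Nonempty ∧ ∀ x ∈ S, ∀ y ∈ S, ReachableWithin G S x y

/-- `S` is a vertex cut of `G` separating `x` from `y`. -/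
def IsCutBetween (G : SimpleGraph V) (x y : V) (S : Set V) : Prop :=
  x ∉ S ∧ y ∉ S ∧ ∀ p : G.Walk x y, ∃ v ∈ p.support, v ∈ S

/-- All vertices of `S` receive the same color under `τ`. -/
def Monochromatic (τ : V → ℕ) (S : Set V) : Prop :=
  ∀ u ∈ S, ∀ v ∈ S, τ u = τ v

/-- `τ` is an MVD-coloring: every pair of distinct nonadjacent vertices is
separated by a monochromatic vertex cut. -/
def IsMVDColoring (G : SimpleGraph V) (τ : V → ℕ) : Prop :=
  ∀ x y : V, x ≠ y → ¬ G.Adj x y →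
    ∃ S : Set V, IsCutBetween G x y S ∧ Monochromatic τ S

/-- The monochromatic vertex-disconnection number: the maximum number of colors
used by an MVD-coloring. -/
noncomputable def mvd (G : SimpleGraph V) : ℕ :=
  sSup {k | ∃ τ : V → ℕ, IsMVDColoring G τ ∧ (Set.range τ).ncard = k}

/-- An `mvd`-coloring: an MVD-coloring attaining `mvd G` colors. -/
def IsOptimalMVDColoring (G : SimpleGraph V) (τ : V → ℕ) : Prop :=
  IsMVDColoring G τ ∧ (Set.range τ).ncard = mvd G

/-- The subgraph of `G` induced on `S` has no cut vertex. -/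
def NoCutVertexOn (G : SimpleGraph V) (S : Set V) : Prop :=
  ∀ v ∈ S, ∀ x ∈ S \ {v}, ∀ y ∈ S \ {v}, ReachableWithin G (S \ {v}) x y

/-- `B` is a block of `G`: a maximal vertex set inducing a connected subgraph
with no cut vertex. -/
def IsBlock (G : SimpleGraph V) (B : Set V) : Prop :=
  ConnectedOn G B ∧ NoCutVertexOn G B ∧
    ∀ C : Set V, B ⊆ C → ConnectedOn G C → NoCutVertexOn G C → C = B

/-- `G` is 2-connected. -/
def TwoConnected (G : SimpleGraph V) : Prop :=
  3 ≤ Nat.card V ∧ ∀ v : V, ConnectedOn G {u | u ≠ v}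

/-- `G` is minimally 2-connected. -/
def MinimallyTwoConnected (G : SimpleGraph V) : Prop :=
  TwoConnected G ∧ ∀ e ∈ G.edgeSet, ¬ TwoConnected (G.deleteEdges {e})

section Reachability

variable {G : SimpleGraph V} {S : Set V} {x y z : V}

lemma SimpleGraph.Walk.reachableWithin (p : G.Walk x y) (hp : ∀ v ∈ p.support, v ∈ S) :
    ReachableWithin G S x y :=
  ⟨p, hp⟩

lemma ReachableWithin.symm (h : ReachableWithin G S x y) : ReachableWithin G S y x := by
  obtain ⟨p, hp⟩ := h
  exact p.reverse.reachableWithin fun v hv => hp v (by simpa using hv)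

lemma ReachableWithin.trans (hxy : ReachableWithin G S x y) (hyz : ReachableWithin G S y z) :
    ReachableWithin G S x z := by
  obtain ⟨p, hp⟩ := hxy
  obtain ⟨q, hq⟩ := hyz
  refine (p.append q).reachableWithin fun v hv => ?_
  rcases (Walk.mem_support_append_iff p q).mp hv with hv | hv
  exacts [hp v hv, hq v hv]

end Reachability

section Cycles

variable {G : SimpleGraph V} {u v : V}

lemma SimpleGraph.Walk.connectedOn_support (p : G.Walk u v) :
    ConnectedOn G {s | s ∈ p.support} := by
  classical
  have hreach : ∀ x (hx : x ∈ p.support), ReachableWithin G {s | s ∈ p.support} u x :=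
    fun x hx => (p.takeUntil x hx).reachableWithin fun s hs =>
      p.support_takeUntil_subset_support hx hs
  exact ⟨⟨u, p.start_mem_support⟩, fun x hx y hy => (hreach x hx).symm.trans (hreach y hy)⟩

/-- Rotating the cycle to start at `z`, its tail is a path ending at `z`; initial segments of
that path reach every other vertex of the cycle while avoiding `z`. -/
lemma SimpleGraph.Walk.IsCycle.noCutVertexOn_support {c : G.Walk u u} (hc : c.IsCycle) :
    NoCutVertexOn G {s | s ∈ c.support} := by
  classical
  intro z hz
  set c' := c.rotate z hz
  have hc' : c'.IsCycle := hc.rotate hz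
  have hreach : ∀ x ∈ {s | s ∈ c.support} \ {z},
      ReachableWithin G ({s | s ∈ c.support} \ {z}) c'.snd x := by
    rintro x ⟨hx, hxz⟩
    have hx' : x ∈ c'.tail.support := by
      have hx : x ∈ c'.support := (c.mem_support_rotate_iff z hz).mpr hx
      rw [← cons_support_tail hc'.not_nil] at hx
      exact (List.mem_cons.mp hx).resolve_left hxz
    refine (c'.tail.takeUntil x hx').reachableWithin fun s hs => ⟨?_, ?_⟩
    · have hs' : s ∈ c'.support := by
        rw [← cons_support_tail hc'.not_nil]
        exact List.mem_cons_of_mem _ (c'.tail.support_takeUntil_subset_support hx' hs)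
      exact (c.mem_support_rotate_iff z hz).mp hs'
    · rintro rfl
      exact endpoint_notMem_support_takeUntil hc'.isPath_tail hx' (Ne.symm hxz) hs
  exact fun x hx y hy => (hreach x hx).symm.trans (hreach y hy)

lemma SimpleGraph.Walk.IsCycle.two_lt_ncard_support {c : G.Walk u u} (hc : c.IsCycle) :
    2 < {s | s ∈ c.support}.ncard := by
  refine (Set.two_lt_ncard_iff c.support.finite_toSet).mpr
    ⟨u, c.snd, c.penultimate, c.start_mem_support, c.getVert_mem_support 1,
      c.getVert_mem_support _, (c.adj_snd hc.not_nil).ne, (c.adj_penultimate hc.not_nil).ne.symm,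
      hc.snd_ne_penultimate⟩

end Cycles

lemma exists_isBlock_superset [Finite V] {G : SimpleGraph V} {C : Set V}
    (hconn : ConnectedOn G C) (hcut : NoCutVertexOn G C) : ∃ B, C ⊆ B ∧ IsBlock G B := by
  obtain ⟨B, ⟨hCB, hBconn, hBcut⟩, hmax⟩ := Set.Finite.exists_maximalFor Set.ncard
    {B | C ⊆ B ∧ ConnectedOn G B ∧ NoCutVertexOn G B} (Set.toFinite _) ⟨C, subset_rfl, hconn, hcut⟩
  refine ⟨B, hCB, hBconn, hBcut, fun D hBD hDconn hDcut => ?_⟩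
  have hle : D.ncard ≤ B.ncard :=
    hmax ⟨hCB.trans hBD, hDconn, hDcut⟩ (Set.ncard_le_ncard hBD)
  exact (Set.eq_of_subset_of_ncard_le hBD hle).symm

lemma Set.exists_mem_ne_ne_of_two_lt_ncard {α : Type*} {s : Set α} (hs : 2 < s.ncard) (x y : α) :
    ∃ z ∈ s, z ≠ x ∧ z ≠ y := by
  by_contra! h
  have hsub : s ⊆ {x, y} := fun z hz => or_iff_not_imp_left.mpr (h z hz)
  have := (Set.ncard_le_ncard hsub).trans (Set.ncard_insert_le x {y})
  simp only [Set.ncard_singleton] at this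
  omega

lemma not_cliqueFree_three_induce {G : SimpleGraph V} {B : Set V} {a b c : V}
    (ha : a ∈ B) (hb : b ∈ B) (hc : c ∈ B) (hab : G.Adj a b) (hac : G.Adj a c)
    (hbc : G.Adj b c) : ¬ (G.induce B).CliqueFree 3 := by
  classical
  exact fun h => h {⟨a, ha⟩, ⟨b, hb⟩, ⟨c, hc⟩}
    (is3Clique_triple_iff.mpr ⟨by exact hab, by exact hac, by exact hbc⟩)

lemma exists_not_adj_of_cliqueFree_three_induce {G : SimpleGraph V} {B : Set V}
    (hB : 2 < B.ncard) (hcf : (G.induce B).CliqueFree 3) :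
    ∃ x ∈ B, ∃ y ∈ B, x ≠ y ∧ ¬ G.Adj x y := by
  by_contra! h
  obtain ⟨a, ha, b, hb, c, hc, hab, hac, hbc⟩ := (Set.two_lt_ncard (Set.finite_of_ncard_pos
    (by omega))).mp hB
  exact not_cliqueFree_three_induce ha hb hc (h a ha b hb hab) (h a ha c hc hac)
    (h b hb c hc hbc) hcf

lemma TwoConnected.two_lt_ncard {G : SimpleGraph V} {B : Set V}
    (hB : TwoConnected (G.induce B)) : 2 < B.ncard := by
  have := hB.1
  rw [Nat.card_coe_set_eq] at this
  omega

/-- If `S` met `B` in at most one vertex `v`, then `x` and `y` would still be joined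
inside `B \ {v}`. -/
lemma IsCutBetween.nontrivial_inter_of_twoConnected {G : SimpleGraph V} {B S : Set V} {x y : V}
    (hcut : IsCutBetween G x y S) (hB : TwoConnected (G.induce B)) (hx : x ∈ B) (hy : y ∈ B) :
    (S ∩ B).Nontrivial := by
  by_contra hS
  obtain ⟨v, hvB, hvx, hvy, hSv⟩ : ∃ v ∈ B, v ≠ x ∧ v ≠ y ∧ S ∩ B ⊆ {v} := by
    rcases (Set.not_nontrivial_iff.mp hS).eq_empty_or_singleton with hempty | ⟨v, hv⟩
    · obtain ⟨v, hvB, hvx, hvy⟩ := Set.exists_mem_ne_ne_of_two_lt_ncard hB.two_lt_ncard x y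
      exact ⟨v, hvB, hvx, hvy, by simp [hempty]⟩
    · have hvS : v ∈ S ∩ B := hv ▸ rfl
      exact ⟨v, hvS.2, fun h => hcut.1 (h ▸ hvS.1), fun h => hcut.2.1 (h ▸ hvS.1), hv.le⟩
  obtain ⟨p, hp⟩ := (hB.2 ⟨v, hvB⟩).2 ⟨x, hx⟩ (fun h => hvx (congrArg Subtype.val h).symm)
    ⟨y, hy⟩ (fun h => hvy (congrArg Subtype.val h).symm)
  obtain ⟨s, hs, hsS⟩ := hcut.2.2 (p.map (Embedding.induce B).toHom)
  obtain ⟨w, hw, rfl⟩ := List.mem_map.mp ((Walk.support_map _ _) ▸ hs)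
  exact hp w hw (Subtype.ext (hSv ⟨hsS, w.2⟩))

lemma Set.injOn_compl_singleton_of_ncard_range {α β : Type*} [Finite α] {f : α → β}
    (hf : (Set.range f).ncard = Nat.card α - 1) {u v : α} (huv : u ≠ v) (h : f u = f v) :
    Set.InjOn f {v}ᶜ := by
  have himage : f '' {v}ᶜ = Set.range f := by
    refine (Set.image_subset_range _ _).antisymm ?_
    rintro _ ⟨a, rfl⟩
    by_cases hav : a = v
    · exact ⟨u, huv, hav ▸ h⟩
    · exact ⟨a, hav, rfl⟩
  exact Set.injOn_of_ncard_image_eq (by rw [himage, hf, Set.ncard_compl, Set.ncard_singleton])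

lemma SimpleGraph.Walk.exists_mem_support_ne_ne {G : SimpleGraph V} {x y : V} (p : G.Walk x y)
    (hxy : x ≠ y) (hadj : ¬ G.Adj x y) : ∃ v ∈ p.support, v ≠ x ∧ v ≠ y :=
  have hp : ¬ p.Nil := p.not_nil_of_ne hxy
  ⟨p.snd, p.getVert_mem_support 1, (p.adj_snd hp).ne', fun h => hadj (h ▸ p.adj_snd hp)⟩

section MVD

variable {G : SimpleGraph V} {τ : V → ℕ}

lemma isMVDColoring_const (G : SimpleGraph V) (c : ℕ) : IsMVDColoring G fun _ => c := by
  intro x y hxy hadj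
  refine ⟨{x, y}ᶜ, ⟨by simp, by simp, fun p => ?_⟩, fun _ _ _ _ => rfl⟩
  obtain ⟨v, hv, hvx, hvy⟩ := p.exists_mem_support_ne_ne hxy hadj
  exact ⟨v, hv, by simp [hvx, hvy]⟩

lemma bddAbove_ncard_range_isMVDColoring [Finite V] (G : SimpleGraph V) :
    BddAbove {k | ∃ τ : V → ℕ, IsMVDColoring G τ ∧ (Set.range τ).ncard = k} := by
  refine ⟨Nat.card V, ?_⟩
  rintro _ ⟨τ, -, rfl⟩
  rw [← Set.image_univ, ← Set.ncard_univ]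
  exact Set.ncard_image_le Set.finite_univ

lemma IsMVDColoring.ncard_range_le_mvd [Finite V] (hτ : IsMVDColoring G τ) :
    (Set.range τ).ncard ≤ mvd G :=
  le_csSup (bddAbove_ncard_range_isMVDColoring G) ⟨τ, hτ, rfl⟩

lemma exists_isOptimalMVDColoring [Finite V] (G : SimpleGraph V) :
    ∃ τ, IsOptimalMVDColoring G τ :=
  Nat.sSup_mem (s := {k | ∃ τ : V → ℕ, IsMVDColoring G τ ∧ (Set.range τ).ncard = k})
    ⟨_, _, isMVDColoring_const G 0, rfl⟩ (bddAbove_ncard_range_isMVDColoring G)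

lemma isMVDColoring_of_isAcyclic (hconn : G.Preconnected) (hA : G.IsAcyclic) (τ : V → ℕ) :
    IsMVDColoring G τ := by
  classical
  intro x y hxy hadj
  obtain ⟨P⟩ := hconn x y
  obtain ⟨v, hv, hvx, hvy⟩ := (P.toPath : G.Walk x y).exists_mem_support_ne_ne hxy hadj
  refine ⟨{v}, ⟨fun h => hvx h.symm, fun h => hvy h.symm, fun p => ⟨v, ?_, rfl⟩⟩,
    fun a ha b hb => by rw [ha, hb]⟩
  have := hA.subsingleton_path x y
  exact p.support_toPath_subset_support (Subsingleton.elim p.toPath P.toPath ▸ hv)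

lemma card_le_mvd_of_isAcyclic [Finite V] (hconn : G.Preconnected) (hA : G.IsAcyclic) :
    Nat.card V ≤ mvd G := by
  have hinj : Function.Injective fun v => (Finite.equivFin V v : ℕ) :=
    Fin.val_injective.comp (Finite.equivFin V).injective
  simpa [Set.ncard_range_of_injective hinj] using
    (isMVDColoring_of_isAcyclic hconn hA fun v => (Finite.equivFin V v : ℕ)).ncard_range_le_mvd

lemma IsMVDColoring.adj_of_injOn_compl {B : Set V} {p : V} (hτ : IsMVDColoring G τ)
    (hB : TwoConnected (G.induce B)) (hp : p ∈ B) (hinj : Set.InjOn τ {p}ᶜ) :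
    ∀ w ∈ B, w ≠ p → G.Adj w p := by
  intro w hw hwp
  by_contra hadj
  obtain ⟨S, hcut, hmono⟩ := hτ w p hwp hadj
  obtain ⟨a, ha, b, hb, hab⟩ := hcut.nontrivial_inter_of_twoConnected hB hw hp
  have hne : ∀ s ∈ S, s ≠ p := fun s hs h => hcut.2.1 (h ▸ hs)
  exact hab (hinj (hne a ha.1) (hne b hb.1) (hmono a ha.1 b hb.1))

lemma IsMVDColoring.ncard_range_ne_of_twoConnected [Finite V] {B : Set V}
    (hτ : IsMVDColoring G τ) (hB : TwoConnected (G.induce B)) (hcf : (G.induce B).CliqueFree 3) :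
    (Set.range τ).ncard ≠ Nat.card V - 1 := by
  intro hcard
  obtain ⟨x, hx, y, hy, hxy, hadj⟩ :=
    exists_not_adj_of_cliqueFree_three_induce hB.two_lt_ncard hcf
  obtain ⟨S, hcut, hmono⟩ := hτ x y hxy hadj
  obtain ⟨p, hp, q, hq, hpq⟩ := hcut.nontrivial_inter_of_twoConnected hB hx hy
  have hτpq : τ p = τ q := hmono p hp.1 q hq.1
  have hadj_p := hτ.adj_of_injOn_compl hB hp.2
    (Set.injOn_compl_singleton_of_ncard_range hcard hpq.symm hτpq.symm)
  have hadj_q := hτ.adj_of_injOn_compl hB hq.2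
    (Set.injOn_compl_singleton_of_ncard_range hcard hpq hτpq)
  obtain ⟨w, hw, hwp, hwq⟩ := Set.exists_mem_ne_ne_of_two_lt_ncard hB.two_lt_ncard p q
  exact not_cliqueFree_three_induce hw hp.2 hq.2 (hadj_p w hw hwp) (hadj_q w hw hwq)
    (hadj_q p hp.2 hpq) hcf

end MVD

/-- No connected graph whose blocks are all trivial or minimally 2-connected
triangle-free has `mvd(G) = n - 1`. -/
theorem stmt12 {V : Type*} [Fintype V] (G : SimpleGraph V) (hG : G.Connected)
    (hB : ∀ C : Set V, IsBlock G C →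
      ((G.induce C).CliqueFree 3 ∧
        (C.ncard ≤ 2 ∨ MinimallyTwoConnected (G.induce C)))) :
    mvd G ≠ Fintype.card V - 1 := by
  rw [← Nat.card_eq_fintype_card]
  intro hmvd
  by_cases hA : G.IsAcyclic
  · have hle := card_le_mvd_of_isAcyclic hG.preconnected hA
    have hpos := Nat.card_pos_iff.mpr ⟨hG.nonempty, inferInstance⟩
    omega
  · obtain ⟨a, c, hc⟩ : ∃ a, ∃ c : G.Walk a a, c.IsCycle := by simpa [IsAcyclic] using hA
    obtain ⟨B, hcB, hBblock⟩ :=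
      exists_isBlock_superset c.connectedOn_support hc.noCutVertexOn_support
    obtain ⟨hcf, hsmall | hmin⟩ := hB B hBblock
    · have hlt := hc.two_lt_ncard_support.trans_le (Set.ncard_le_ncard hcB)
      omega
    obtain ⟨τ, hτ, hτcard⟩ := exists_isOptimalMVDColoring G
    exact hτ.ncard_range_ne_of_twoConnected hmin.1 hcf (hτcard.trans hmvd)
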